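/- For a probability vector λ1 ≥ λ2 ≥ ... ≥ λd ≥ 0 with ∑ λi = 1 and fixed purity ∑ λi² = γ ∈ [1/d, 1], the minimum of the Shannon entropy -∑ λi log λi is attained at λ1 = ... = λ_{k-1} = (1-α)/(k-1), λ_k = α, λ_{k+1} = ... = λ_d = 0, where k is the unique integer with 1/k ≤ γ ≤ 1/(k-1) and α = 1/k - √((1 - 1/k)(γ - 1/k)). -/

import Mathlib

/-!
The feasible set is compact, so the entropy attains its minimum at some `q`. Moving three
coordinates of `q` along the circle cut out by the plane `x + y + z = const` and the sphere
`x² + y² + z² = const` keeps `q` feasible. The first-order condition along that circle says that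
`(x, log x)`, `(y, log y)`, `(z, log z)` are collinear, which strict concavity of `log` forbids for
three distinct positive values; the second-order condition rules out two equal values below a
larger one. Hence the positive entries of `q` are `n` copies of some `v` and at most one smaller
value `u`; solving the two constraints for `n`, `u` and `v` gives the configuration of the
statement.
-/

open Real Filter Finset Topology

theorem IsLocalMin.nonneg_of_hasDerivAt_deriv {f f' : ℝ → ℝ} {x₀ D : ℝ} (hmin : IsLocalMin f x₀)
    (hf : ∀ᶠ x in 𝓝 x₀, HasDerivAt f (f' x) x) (hf' : HasDerivAt f' D x₀) : 0 ≤ D := by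
  -- If `D < 0`, then `x₀` is also a local maximum, so `f` is locally constant and `D = 0`.
  by_contra! hD
  have hderiv : deriv f =ᶠ[𝓝 x₀] f' := hf.mono fun x hx => hx.deriv
  have hD' : deriv (deriv f) x₀ = D := (hf'.congr_of_eventuallyEq hderiv).deriv
  have hmax : IsLocalMax f x₀ := isLocalMax_of_deriv_deriv_neg (hD' ▸ hD)
    (hderiv.eq_of_nhds.trans (hmin.hasDerivAt_eq_zero hf.self_of_nhds))
    hf.self_of_nhds.continuousAt
  have hconst : f =ᶠ[𝓝 x₀] fun _ => f x₀ :=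
    (hmin.and hmax).mono fun x hx => le_antisymm hx.2 hx.1
  have hderiv0 : deriv f =ᶠ[𝓝 x₀] fun _ => 0 :=
    hconst.eventuallyEq_nhds.mono fun x hx => by rw [hx.deriv_eq, deriv_const]
  rw [← hD', hderiv0.deriv_eq, deriv_const] at hD
  exact lt_irrefl _ hD

noncomputable def arc (c a b t : ℝ) : ℝ := c + a * cos t + b * sin t

lemma arc_zero (c a b : ℝ) : arc c a b 0 = c + a := by simp [arc]

lemma continuous_arc (c a b : ℝ) : Continuous (arc c a b) := by
  unfold arc; fun_prop

lemma hasDerivAt_arc (c a b t : ℝ) : HasDerivAt (arc c a b) (arc 0 b (-a) t) t :=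
  ((((hasDerivAt_cos t).const_mul a).const_add c).add
    ((hasDerivAt_sin t).const_mul b)).congr_deriv (by simp only [arc]; ring)

lemma eventually_arc_pos {c a b : ℝ} (h : 0 < c + a) : ∀ᶠ t in 𝓝 0, 0 < arc c a b t :=
  continuousAt_const.eventually_lt (continuous_arc c a b).continuousAt (by rwa [arc_zero])

lemma hasDerivAt_negMulLog_arc {c a b t : ℝ} (h : arc c a b t ≠ 0) :
    HasDerivAt (fun s => negMulLog (arc c a b s)) ((-log (arc c a b t) - 1) * arc 0 b (-a) t) t :=
  (hasDerivAt_negMulLog h).comp t (hasDerivAt_arc c a b t)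

lemma hasDerivAt_negMulLog_arc_deriv {c a b : ℝ} (h : c + a ≠ 0) :
    HasDerivAt (fun s => (-log (arc c a b s) - 1) * arc 0 b (-a) s)
      (-b ^ 2 / (c + a) + (log (c + a) + 1) * a) 0 := by
  have hlog := (hasDerivAt_log (by rwa [arc_zero])).comp 0 (hasDerivAt_arc c a b 0)
  refine (((hlog.neg).sub_const 1).mul (hasDerivAt_arc 0 b (-a) 0)).congr_deriv ?_
  simp only [Function.comp_apply, Pi.neg_apply, arc, cos_zero, sin_zero, mul_one, mul_zero,
    add_zero, zero_add]
  field_simp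
  ring

noncomputable def entropy {ι : Type*} [Fintype ι] (p : ι → ℝ) : ℝ := ∑ i, negMulLog (p i)

section ArcFamily

variable {κ : Type*} [Fintype κ] (c a b : κ → ℝ)

lemma hasDerivAt_entropy_arc {t : ℝ} (h : ∀ k, arc (c k) (a k) (b k) t ≠ 0) :
    HasDerivAt (fun s => entropy fun k => arc (c k) (a k) (b k) s)
      (∑ k, (-log (arc (c k) (a k) (b k) t) - 1) * arc 0 (b k) (-a k) t) t :=
  HasDerivAt.fun_sum fun k _ => hasDerivAt_negMulLog_arc (h k)

lemma hasDerivAt_entropy_arc_zero (h : ∀ k, c k + a k ≠ 0) :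
    HasDerivAt (fun s => entropy fun k => arc (c k) (a k) (b k) s)
      (∑ k, (-log (c k + a k) - 1) * b k) 0 := by
  simpa [arc_zero, arc] using hasDerivAt_entropy_arc c a b (t := 0) (by simpa [arc_zero] using h)

lemma hasDerivAt_entropy_arc_deriv (h : ∀ k, c k + a k ≠ 0) :
    HasDerivAt (fun s => ∑ k, (-log (arc (c k) (a k) (b k) s) - 1) * arc 0 (b k) (-a k) s)
      (∑ k, (-b k ^ 2 / (c k + a k) + (log (c k + a k) + 1) * a k)) 0 :=
  HasDerivAt.fun_sum fun k _ => hasDerivAt_negMulLog_arc_deriv (h k)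

lemma IsLocalMin.entropy_arc_second_order (h : ∀ k, 0 < c k + a k)
    (hmin : IsLocalMin (fun s => entropy fun k => arc (c k) (a k) (b k) s) 0) :
    0 ≤ ∑ k, (-b k ^ 2 / (c k + a k) + (log (c k + a k) + 1) * a k) :=
  hmin.nonneg_of_hasDerivAt_deriv
    ((eventually_all.2 fun k => eventually_arc_pos (h k)).mono
      fun _ ht => hasDerivAt_entropy_arc c a b fun k => (ht k).ne')
    (hasDerivAt_entropy_arc_deriv c a b fun k => (h k).ne')

end ArcFamily

/-- The circle through `p` on which `∑ pₖ` and `∑ pₖ²` are constant: its center is the mean of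
`p`, and `(p (k + 2) - p (k + 1)) / √3` is the cross product of the unit normal `(1, 1, 1) / √3`
with `p` minus its center. -/
noncomputable def circleThrough (p : Fin 3 → ℝ) (t : ℝ) : Fin 3 → ℝ := fun k =>
  arc ((∑ i, p i) / 3) (p k - (∑ i, p i) / 3) ((p (k + 2) - p (k + 1)) / √3) t

lemma circleThrough_zero (p : Fin 3 → ℝ) : circleThrough p 0 = p := by
  ext k; simp [circleThrough, arc_zero]

lemma sum_circleThrough (p : Fin 3 → ℝ) (t : ℝ) : ∑ k, circleThrough p t k = ∑ k, p k := by
  simp [circleThrough, arc, Fin.sum_univ_three]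
  ring

lemma sum_sq_circleThrough (p : Fin 3 → ℝ) (t : ℝ) :
    ∑ k, circleThrough p t k ^ 2 = ∑ k, p k ^ 2 := by
  have h3 : (√3)⁻¹ ^ 2 = 3⁻¹ := by rw [inv_pow, sq_sqrt (by norm_num)]
  simp only [circleThrough, arc, Fin.sum_univ_three, Fin.isValue, Fin.reduceAdd]
  ring_nf
  rw [h3]
  linear_combination (2/3 * (p 0 ^ 2 + p 1 ^ 2 + p 2 ^ 2 - p 0 * p 1 - p 0 * p 2 - p 1 * p 2)) *
    sin_sq_add_cos_sq t

lemma eventually_circleThrough_pos {p : Fin 3 → ℝ} {k : Fin 3} (hp : 0 < p k) :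
    ∀ᶠ t in 𝓝 0, 0 < circleThrough p t k :=
  eventually_arc_pos (by simpa using hp)

lemma IsLocalMin.log_mul_sub_add_eq_zero {p : Fin 3 → ℝ} (hp : ∀ k, 0 < p k)
    (hmin : IsLocalMin (fun t => entropy (circleThrough p t)) 0) :
    log (p 0) * (p 2 - p 1) + log (p 1) * (p 0 - p 2) + log (p 2) * (p 1 - p 0) = 0 := by
  have h := hmin.hasDerivAt_eq_zero
    (hasDerivAt_entropy_arc_zero _ _ _ fun k => by simpa using (hp k).ne')
  simp only [add_sub_cancel, Fin.sum_univ_three, Fin.isValue, Fin.reduceAdd] at h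
  field_simp at h
  linear_combination -h

lemma not_isLocalMin_entropy_circleThrough {u w : ℝ} (hu : 0 < u) (huw : u < w) :
    ¬ IsLocalMin (fun t => entropy (circleThrough ![u, u, w] t)) 0 := by
  intro hmin
  have hw : 0 < w := hu.trans huw
  have h := hmin.entropy_arc_second_order _ _ _ fun k => by
    fin_cases k <;> simp [hu, hw]
  simp only [add_sub_cancel, Fin.sum_univ_three, Fin.isValue, Fin.reduceAdd] at h
  simp at h
  have hlog : log w - log u < (w - u) / u := by
    have := log_lt_sub_one_of_pos (div_pos hw hu) (div_ne_one_of_ne huw.ne')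
    rwa [log_div hw.ne' hu.ne', ← div_self hu.ne', div_sub_div_same] at this
  have key : 0 ≤ 2 * (w - u) / 3 * (log w - log u - (w - u) / u) := by
    convert h using 1
    rw [div_pow, div_pow, sq_sqrt zero_le_three]
    field_simp
    ring
  have := mul_neg_of_pos_of_neg (by linarith : 0 < 2 * (w - u) / 3) (sub_neg.2 hlog)
  linarith

lemma log_mul_sub_add_neg {x y z : ℝ} (hx : 0 < x) (hxy : x < y) (hyz : y < z) :
    log x * (z - y) + log y * (x - z) + log z * (y - x) < 0 := by
  have h := strictConcaveOn_log_Ioi.slope_anti_adjacent hx (hx.trans (hxy.trans hyz)) hxy hyz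
  rw [div_lt_div_iff₀ (sub_pos.2 hyz) (sub_pos.2 hxy)] at h
  linarith

lemma injective_vecCons_three {ι : Type*} {i j l : ι} (hij : i ≠ j) (hil : i ≠ l) (hjl : j ≠ l) :
    Function.Injective ![i, j, l] := by
  intro a b hab
  fin_cases a <;> fin_cases b <;> simp_all [eq_comm]

section Minimizers

variable {ι : Type*} [Fintype ι]

def puritySlice (ι : Type*) [Fintype ι] (γ : ℝ) : Set (ι → ℝ) :=
  {p | (∀ i, 0 ≤ p i) ∧ ∑ i, p i = 1 ∧ ∑ i, p i ^ 2 = γ}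

lemma isCompact_puritySlice (γ : ℝ) : IsCompact (puritySlice ι γ) := by
  have hsub : puritySlice ι γ ⊆ Set.univ.pi fun _ => Set.Icc 0 1 := fun p ⟨h0, h1, _⟩ i _ =>
    ⟨h0 i, h1 ▸ single_le_sum (fun j _ => h0 j) (mem_univ i)⟩
  refine (isCompact_univ_pi fun _ => isCompact_Icc).of_isClosed_subset ?_ hsub
  simp only [puritySlice, Set.ofPred_and, Set.ofPred_forall]
  exact (isClosed_iInter fun i => isClosed_le continuous_const (continuous_apply i)).inter
    ((isClosed_eq (by fun_prop) continuous_const).inter (isClosed_eq (by fun_prop) continuous_const))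

lemma sum_comp_extend_add {κ : Type*} [Fintype κ] {e : κ → ι} (he : Function.Injective e)
    (f : κ → ℝ) (q : ι → ℝ) (g : ℝ → ℝ) :
    ∑ m, g (Function.extend e f q m) + ∑ k, g (q (e k)) = ∑ m, g (q m) + ∑ k, g (f k) := by
  classical
  set s := univ.map ⟨e, he⟩
  have hext : ∑ m ∈ sᶜ, g (Function.extend e f q m) = ∑ m ∈ sᶜ, g (q m) :=
    sum_congr rfl fun m hm => by
      rw [Function.extend_apply' _ _ _ (by simpa [s] using hm)]
  rw [← sum_compl_add_sum s, ← sum_compl_add_sum s, hext]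
  simp only [s, sum_map, Function.Embedding.coeFn_mk, he.extend_apply]
  ring

variable {γ : ℝ} {q : ι → ℝ}

lemma eventually_extend_circleThrough_mem {e : Fin 3 → ι} (he : Function.Injective e)
    (hq : q ∈ puritySlice ι γ) (hpos : ∀ k, 0 < (q ∘ e) k) :
    ∀ᶠ t in 𝓝 0, Function.extend e (circleThrough (q ∘ e) t) q ∈ puritySlice ι γ := by
  obtain ⟨hq0, hq1, hq2⟩ := hq
  filter_upwards [eventually_all.2 fun k => eventually_circleThrough_pos (hpos k)] with t ht
  refine ⟨fun m => ?_, ?_, ?_⟩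
  · by_cases hm : ∃ k, e k = m
    · obtain ⟨k, rfl⟩ := hm
      rw [he.extend_apply]
      exact (ht k).le
    · rw [Function.extend_apply' _ _ _ hm]
      exact hq0 m
  · have := sum_comp_extend_add he (circleThrough (q ∘ e) t) q id
    simp only [id, sum_circleThrough, Function.comp_apply] at this
    linarith
  · have := sum_comp_extend_add he (circleThrough (q ∘ e) t) q (· ^ 2)
    simp only [sum_sq_circleThrough, Function.comp_apply] at this
    linarith

lemma IsMinOn.isLocalMin_entropy_circleThrough (hmin : IsMinOn entropy (puritySlice ι γ) q)
    (hq : q ∈ puritySlice ι γ) {e : Fin 3 → ι} (he : Function.Injective e)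
    (hpos : ∀ k, 0 < (q ∘ e) k) : IsLocalMin (fun t => entropy (circleThrough (q ∘ e) t)) 0 := by
  filter_upwards [eventually_extend_circleThrough_mem he hq hpos] with t ht
  have hle : entropy q ≤ entropy (Function.extend e (circleThrough (q ∘ e) t) q) := hmin ht
  have := sum_comp_extend_add he (circleThrough (q ∘ e) t) q negMulLog
  rw [circleThrough_zero]
  unfold entropy at hle ⊢
  simp only [Function.comp_apply] at this ⊢
  linarith

lemma IsMinOn.eq_of_lt_of_lt (hmin : IsMinOn entropy (puritySlice ι γ) q)
    (hq : q ∈ puritySlice ι γ) {i j l : ι} (hi : 0 < q i) (hj : 0 < q j) (hil : q i < q l)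
    (hjl : q j < q l) : i = j := by
  by_contra hij
  wlog hle : q i ≤ q j generalizing i j
  · exact this hj hi hjl hil (Ne.symm hij) (le_of_not_ge hle)
  have he := injective_vecCons_three hij (ne_of_apply_ne q hil.ne) (ne_of_apply_ne q hjl.ne)
  have hpos : ∀ k, 0 < ![q i, q j, q l] k := by
    intro k; fin_cases k <;> simp [hi, hj, hi.trans hil]
  have hcomp : q ∘ ![i, j, l] = ![q i, q j, q l] := by
    ext k; fin_cases k <;> rfl
  have hloc := hmin.isLocalMin_entropy_circleThrough hq he (hcomp ▸ hpos)
  rw [hcomp] at hloc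
  rcases hle.lt_or_eq with hlt | heq
  · have := hloc.log_mul_sub_add_eq_zero hpos
    exact (log_mul_sub_add_neg hi hlt hjl).ne this
  · rw [heq] at hloc
    exact not_isLocalMin_entropy_circleThrough hj hjl hloc

lemma IsMinOn.exists_two_level (hmin : IsMinOn entropy (puritySlice ι γ) q)
    (hq : q ∈ puritySlice ι γ) :
    ∃ (n : ℕ) (u v : ℝ), 0 < n ∧ 0 ≤ u ∧ u < v ∧ n * v + u = 1 ∧ n * v ^ 2 + u ^ 2 = γ ∧
      entropy q = n * negMulLog v + negMulLog u := by
  classical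
  obtain ⟨hq0, hq1, hq2⟩ := hq
  obtain ⟨l, -, hl⟩ := exists_max_image univ q (nonempty_of_sum_ne_zero (hq1 ▸ one_ne_zero))
  have hv : 0 < q l := by
    by_contra! h
    have := sum_nonpos fun m (_ : m ∈ univ) => (hl m (mem_univ m)).trans h
    linarith
  set V := univ.filter fun m => q m = q l
  set M := univ.filter fun m => 0 < q m ∧ q m < q l
  obtain ⟨u, hu0, hul, hMu⟩ : ∃ u, 0 ≤ u ∧ u < q l ∧
      ∀ g : ℝ → ℝ, g 0 = 0 → ∑ m ∈ M, g (q m) = g u := by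
    rcases M.eq_empty_or_nonempty with hM | ⟨a, ha⟩
    · exact ⟨0, le_rfl, hv, fun g hg => by simp [hM, hg]⟩
    · simp only [M, mem_filter, mem_univ, true_and] at ha
      have hMa : M = {a} := eq_singleton_iff_unique_mem.2 ⟨by simpa [M] using ha,
        fun b hb => by
          simp only [M, mem_filter, mem_univ, true_and] at hb
          exact hmin.eq_of_lt_of_lt ⟨hq0, hq1, hq2⟩ hb.1 ha.1 hb.2 ha.2⟩
      exact ⟨q a, ha.1.le, ha.2, fun g _ => by simp [hMa]⟩
  have hsplit : ∀ g : ℝ → ℝ, g 0 = 0 → ∑ m, g (q m) = #V * g (q l) + g u := by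
    intro g hg
    have hdisj : Disjoint V M := disjoint_filter.2 fun m _ hm hm' => hm'.2.ne hm
    rw [← sum_subset (subset_univ (V ∪ M)), sum_union hdisj, hMu g hg,
      sum_congr rfl fun m hm => by rw [(mem_filter.1 hm).2], sum_const, nsmul_eq_mul]
    intro m _ hm
    simp only [V, M, mem_union, mem_filter, mem_univ, true_and, not_or, not_and] at hm
    have hm0 : q m = 0 :=
      le_antisymm (not_lt.1 fun h => hm.2 h (lt_of_le_of_ne (hl m (mem_univ m)) hm.1)) (hq0 m)
    rw [hm0, hg]
  refine ⟨#V, u, q l, card_pos.2 ⟨l, by simp [V]⟩, hu0, hul, ?_, ?_, ?_⟩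
  · simpa [hq1] using (hsplit id rfl).symm
  · rw [← hq2, hsplit (· ^ 2) (zero_pow two_ne_zero)]
  · exact hsplit negMulLog negMulLog_zero

end Minimizers

noncomputable def minEntropyWeight (k : ℕ) (γ : ℝ) : ℝ :=
  1 / (k : ℝ) - √((1 - 1 / (k : ℝ)) * (γ - 1 / k))

noncomputable def minEntropy (k : ℕ) (γ : ℝ) : ℝ :=
  -((1 - minEntropyWeight k γ) * log ((1 - minEntropyWeight k γ) / ((k : ℝ) - 1)))
    - minEntropyWeight k γ * log (minEntropyWeight k γ)

lemma minEntropyWeight_eq {k : ℕ} {γ u v : ℝ} (hk : 1 < (k : ℝ)) (huv : u ≤ v)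
    (hsum : ((k : ℝ) - 1) * v + u = 1) (hpur : ((k : ℝ) - 1) * v ^ 2 + u ^ 2 = γ) :
    minEntropyWeight k γ = u := by
  have hk0 : (0 : ℝ) < k := by linarith
  have hu : u ≤ 1 / k := by rw [le_div_iff₀ hk0]; nlinarith
  have hsq : (1 - 1 / (k : ℝ)) * (γ - 1 / k) = (1 / k - u) ^ 2 := by
    rw [← hpur]
    field_simp
    linear_combination ((k : ℝ) * ((k - 1) * v + 1 - u)) * hsum
  rw [minEntropyWeight, hsq, sqrt_sq (sub_nonneg.2 hu)]
  ring

lemma two_level_card_eq {k n : ℕ} {γ u v : ℝ} (hn : 0 < n) (hu : 0 ≤ u) (huv : u < v)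
    (hsum : n * v + u = 1) (hpur : n * v ^ 2 + u ^ 2 = γ)
    (hk1 : 1 / (k : ℝ) ≤ γ) (hk2 : γ ≤ 1 / ((k : ℝ) - 1)) :
    1 < k ∧ (n + 1 = k ∨ (n = k ∧ u = 0)) := by
  have hn' : (1 : ℝ) ≤ n := by exact_mod_cast hn
  have hlow : (n + 1) * γ - 1 = n * (v - u) ^ 2 := by
    rw [← hpur]; linear_combination (n * v + u + 1) * hsum
  have hhigh : n * γ - 1 = -(u * ((2 * v - u) * n + u)) := by
    rw [← hpur]; linear_combination (n * v + u + 1) * hsum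
  have hgap : 0 < (n : ℝ) * (v - u) ^ 2 := by nlinarith [sq_pos_of_pos (sub_pos.2 huv)]
  have hγ : 0 < γ := by nlinarith
  have hk : 1 < (k : ℝ) := by
    by_contra! h
    linarith [div_nonpos_of_nonneg_of_nonpos zero_le_one (sub_nonpos.2 h)]
  have hk2' : ((k : ℝ) - 1) * γ ≤ 1 := by rwa [le_div_iff₀' (by linarith)] at hk2
  have hk1' : 1 ≤ k * γ := by rwa [div_le_iff₀' (by linarith)] at hk1
  have hpos : 0 < (2 * v - u) * n + u := by nlinarith
  have h1 : k < n + 2 := by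
    have : (k : ℝ) < n + 2 := by nlinarith
    exact_mod_cast this
  have h2 : n ≤ k := by
    have : (n : ℝ) ≤ k := by nlinarith [mul_nonneg hu hpos.le]
    exact_mod_cast this
  refine ⟨by exact_mod_cast hk, ?_⟩
  rcases (by omega : n + 1 = k ∨ n = k) with h | rfl
  · exact Or.inl h
  · exact Or.inr ⟨rfl, by nlinarith [mul_nonneg hu hpos.le]⟩

lemma two_level_entropy_eq {k n : ℕ} {γ u v : ℝ} (hn : 0 < n) (hu : 0 ≤ u) (huv : u < v)
    (hsum : n * v + u = 1) (hpur : n * v ^ 2 + u ^ 2 = γ)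
    (hk1 : 1 / (k : ℝ) ≤ γ) (hk2 : γ ≤ 1 / ((k : ℝ) - 1)) :
    n * negMulLog v + negMulLog u = minEntropy k γ := by
  unfold minEntropy
  obtain ⟨hk, rfl | ⟨rfl, rfl⟩⟩ := two_level_card_eq hn hu huv hsum hpur hk1 hk2
  · have hk' : ((n + 1 : ℕ) : ℝ) - 1 = n := by push_cast; ring
    rw [minEntropyWeight_eq (by exact_mod_cast hk) huv.le (by rwa [hk']) (by rwa [hk']), hk',
      show (1 - u) / n = v by field_simp; linarith]
    simp only [negMulLog]
    linear_combination (-log v) * hsum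
  · have hk' : (1 : ℝ) < n := by exact_mod_cast hk
    rw [minEntropyWeight_eq (v := v) hk' le_rfl (by linarith) (by rw [← hpur]; ring),
      show (1 - v) / ((n : ℝ) - 1) = v by rw [div_eq_iff (by linarith)]; linarith]
    simp only [negMulLog]
    linear_combination (-log v) * hsum

lemma minEntropy_le_entropy {ι : Type*} [Fintype ι] {k : ℕ} {γ : ℝ}
    (hk1 : 1 / (k : ℝ) ≤ γ) (hk2 : γ ≤ 1 / ((k : ℝ) - 1)) {p : ι → ℝ} (hp : p ∈ puritySlice ι γ) :
    minEntropy k γ ≤ entropy p := by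
  obtain ⟨q, hq, hmin⟩ := (isCompact_puritySlice γ).exists_isMinOn ⟨p, hp⟩
    (continuous_finsetSum _ fun i _ => continuous_negMulLog.comp (continuous_apply i)).continuousOn
  obtain ⟨n, u, v, hn, hu, huv, hsum, hpur, hq'⟩ := hmin.exists_two_level hq
  rw [← two_level_entropy_eq hn hu huv hsum hpur hk1 hk2, ← hq']
  exact hmin hp

theorem stmt2 (d k : ℕ) (γ : ℝ)
    (hk1 : 1/(k:ℝ) ≤ γ) (hk2 : γ ≤ 1/((k:ℝ)-1))
    (lam : Fin d → ℝ)
    (hpos : ∀ i, 0 ≤ lam i) (hsum : ∑ i, lam i = 1) (hpur : ∑ i, lam i ^ 2 = γ) :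
    let a : ℝ := 1/(k:ℝ) - Real.sqrt ((1 - 1/(k:ℝ)) * (γ - 1/(k:ℝ)))
    (-((1 - a) * Real.logb 2 ((1 - a)/((k:ℝ)-1))) - a * Real.logb 2 a ≤
      -∑ i, lam i * Real.logb 2 (lam i)) := by
  intro a
  have hbound : -((1 - a) * log ((1 - a) / ((k : ℝ) - 1))) - a * log a ≤ entropy lam :=
    minEntropy_le_entropy hk1 hk2 ⟨hpos, hsum, hpur⟩
  have hentropy : -∑ i, lam i * logb 2 (lam i) = entropy lam / log 2 := by
    simp only [entropy, negMulLog, logb, sum_div, ← sum_neg_distrib]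
    exact sum_congr rfl fun i _ => by ring
  rw [hentropy, logb, logb]
  calc _ = (-((1 - a) * log ((1 - a) / ((k : ℝ) - 1))) - a * log a) / log 2 := by ring
    _ ≤ entropy lam / log 2 := div_le_div_of_nonneg_right hbound (log_pos one_lt_two).le
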